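/- For positive integers N, l with l < N, the mask â(ξ) of the pseudo spline of type II with order (N,l) satisfies |â(ξ)|² + |â(ξ+π)|² ≤ |â(ξ)| + |â(ξ+π)| ≤ 1 for all real ξ. -/

import Mathlib

/-!
Put `s = sin² (ξ/2)` and `c = cos² (ξ/2)`, so `s + c = 1`. Reading the binomial terms
`C(N+l, k) sᵏ c^(N+l-k)` as the distribution of the number of successes in `N + l` Bernoulli(`s`)
trials, `â(ξ) = c^N ∑_{j ≤ l} C(N-1+j, j) sʲ` is the probability that the `N`-th failure occurs
within the first `N + l` trials, i.e. of at most `l` successes; symmetrically `â(ξ + π)` is the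
probability of at most `l` failures, i.e. of at least `N` successes. As `l < N` these events are
disjoint, so `0 ≤ â(ξ) + â(ξ + π) ≤ 1`, and `t² ≤ t` on `[0, 1]` gives the first inequality.
-/

open Real Finset

noncomputable def pseudoMaskII (N l : ℕ) (ξ : ℝ) : ℝ :=
  Real.cos (ξ / 2) ^ (2 * N) *
    ∑ j ∈ Finset.range (l + 1), ((N - 1 + j).choose j : ℝ) * Real.sin (ξ / 2) ^ (2 * j)

section BinomialTerm

variable {R : Type*} [CommSemiring R]

def binomialTerm (x y : R) (i j : ℕ) : R := ((i + j).choose i : R) * x ^ i * y ^ j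

theorem binomialTerm_comm (x y : R) (i j : ℕ) : binomialTerm x y i j = binomialTerm y x j i := by
  rw [binomialTerm, binomialTerm, Nat.choose_symm_add, add_comm i j]
  ring

theorem binomialTerm_succ_succ (x y : R) (i j : ℕ) :
    binomialTerm x y (i + 1) (j + 1) =
      x * binomialTerm x y i (j + 1) + y * binomialTerm x y (i + 1) j := by
  simp only [binomialTerm, show i + 1 + (j + 1) = i + (j + 1) + 1 by omega,
    Nat.choose_succ_succ, show i + (j + 1) = i + 1 + j by omega]
  push_cast
  ring

theorem sum_antidiagonal_binomialTerm (x y : R) (n : ℕ) :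
    ∑ p ∈ antidiagonal n, binomialTerm x y p.1 p.2 = (x + y) ^ n := by
  rw [(Commute.all x y).add_pow',
    Nat.sum_antidiagonal_subst (f := fun p n => n.choose p.1 • (x ^ p.1 * y ^ p.2))]
  simp only [binomialTerm, nsmul_eq_mul, mul_assoc]

@[simp]
theorem binomialTerm_zero_left (x y : R) (j : ℕ) : binomialTerm x y 0 j = y ^ j := by
  simp [binomialTerm]

theorem sum_antidiagonal_binomialTerm_succ {x y : R} (hxy : x + y = 1) (n l : ℕ) :
    ∑ p ∈ antidiagonal (l + 1), binomialTerm x y p.1 (n + 1 + p.2) =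
      ∑ p ∈ antidiagonal l, binomialTerm x y p.1 (n + 1 + p.2) + y * binomialTerm x y (l + 1) n := by
  set S := ∑ p ∈ antidiagonal l, binomialTerm x y p.1 (n + 1 + p.2)
  set S' := ∑ p ∈ antidiagonal l, binomialTerm x y (p.1 + 1) (n + p.2)
  -- split `∑ p ∈ antidiagonal (l + 1), binomialTerm x y p.1 (n + p.2)` at either endpoint
  have two_ways : y ^ (n + 1 + l + 1) + y * S' = y * binomialTerm x y (l + 1) n + y * S := by
    have := (Nat.sum_antidiagonal_succ (n := l)
      (f := fun p => binomialTerm x y p.1 (n + p.2))).symm.trans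
        (Nat.sum_antidiagonal_succ' (f := fun p => binomialTerm x y p.1 (n + p.2)))
    simp only [binomialTerm_zero_left, add_zero, ← add_assoc n, add_right_comm n _ 1] at this
    rw [← mul_add, ← this, mul_add, ← pow_succ']
  rw [Nat.sum_antidiagonal_succ]
  simp only [add_right_comm n 1, binomialTerm_succ_succ, sum_add_distrib, ← mul_sum]
  have hS : ∑ p ∈ antidiagonal l, binomialTerm x y p.1 (n + p.2 + 1) = S := by
    simp only [S, add_right_comm n]
  rw [binomialTerm_zero_left, hS]
  calc _ = x * S + (y ^ (n + 1 + l + 1) + y * S') := by ring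
    _ = (x + y) * S + y * binomialTerm x y (l + 1) n := by rw [two_ways]; ring
    _ = S + y * binomialTerm x y (l + 1) n := by rw [hxy, one_mul]

theorem pow_mul_sum_choose_eq_sum_antidiagonal {x y : R} (hxy : x + y = 1) (n l : ℕ) :
    y ^ (n + 1) * ∑ j ∈ range (l + 1), ((n + j).choose j : R) * x ^ j =
      ∑ p ∈ antidiagonal l, binomialTerm x y p.1 (n + 1 + p.2) := by
  induction l with
  | zero => simp
  | succ l ih =>
    rw [sum_range_succ, mul_add, ih, sum_antidiagonal_binomialTerm_succ hxy, binomialTerm,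
      add_comm (l + 1) n]
    ring

end BinomialTerm

theorem sum_antidiagonal_shifts_le {M : Type*} [AddCommMonoid M] [PartialOrder M]
    [IsOrderedAddMonoid M] {f : ℕ → ℕ → M} (hf : ∀ i j, 0 ≤ f i j) {N l : ℕ} (hl : l < N) :
    ∑ p ∈ antidiagonal l, f p.1 (N + p.2) + ∑ p ∈ antidiagonal l, f (N + p.1) p.2 ≤
      ∑ p ∈ antidiagonal (N + l), f p.1 p.2 := by
  simp only [Nat.sum_antidiagonal_eq_sum_range_succ (fun i j => f i (N + j)),
    Nat.sum_antidiagonal_eq_sum_range_succ (fun i j => f (N + i) j),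
    Nat.sum_antidiagonal_eq_sum_range_succ f, Nat.succ_eq_add_one, add_assoc N]
  rw [sum_range_add _ N (l + 1)]
  simp only [Nat.add_sub_add_left]
  refine add_le_add ?_ le_rfl
  calc ∑ k ∈ range (l + 1), f k (N + (l - k)) = ∑ k ∈ range (l + 1), f k (N + l - k) :=
        sum_congr rfl fun k hk => by rw [Nat.add_sub_assoc (by simpa [Nat.lt_succ_iff] using hk)]
    _ ≤ ∑ k ∈ range N, f k (N + l - k) :=
        sum_le_sum_of_subset_of_nonneg (range_subset_range.2 hl) fun _ _ _ => hf _ _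

theorem binomialTerm_nonneg {R : Type*} [CommSemiring R] [PartialOrder R] [IsOrderedRing R]
    {x y : R} (hx : 0 ≤ x) (hy : 0 ≤ y) (i j : ℕ) : 0 ≤ binomialTerm x y i j := by
  unfold binomialTerm
  positivity

theorem pow_mul_sum_choose_add_pow_mul_sum_choose_le_one {R : Type*} [CommSemiring R]
    [PartialOrder R] [IsOrderedRing R] {x y : R} (hx : 0 ≤ x) (hy : 0 ≤ y) (hxy : x + y = 1)
    {n l : ℕ} (hl : l ≤ n) :
    y ^ (n + 1) * ∑ j ∈ range (l + 1), ((n + j).choose j : R) * x ^ j +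
      x ^ (n + 1) * ∑ j ∈ range (l + 1), ((n + j).choose j : R) * y ^ j ≤ 1 := by
  rw [pow_mul_sum_choose_eq_sum_antidiagonal hxy, pow_mul_sum_choose_eq_sum_antidiagonal
    ((add_comm y x).trans hxy), ← Nat.sum_antidiagonal_swap (f := fun p => binomialTerm y x _ _)]
  simp only [Prod.fst_swap, Prod.snd_swap, binomialTerm_comm y x]
  calc _ ≤ ∑ p ∈ antidiagonal (n + 1 + l), binomialTerm x y p.1 p.2 :=
        sum_antidiagonal_shifts_le (binomialTerm_nonneg hx hy) (Nat.lt_succ_of_le hl)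
    _ = 1 := by rw [sum_antidiagonal_binomialTerm, hxy, one_pow]

theorem pseudoMaskII_nonneg (N l : ℕ) (ξ : ℝ) : 0 ≤ pseudoMaskII N l ξ := by
  simp only [pseudoMaskII, pow_mul]
  positivity

theorem pseudoMaskII_add_pi (N l : ℕ) (ξ : ℝ) :
    pseudoMaskII N l (ξ + π) = sin (ξ / 2) ^ (2 * N) *
      ∑ j ∈ range (l + 1), ((N - 1 + j).choose j : ℝ) * cos (ξ / 2) ^ (2 * j) := by
  simp only [pseudoMaskII, add_div, cos_add_pi_div_two, sin_add_pi_div_two, pow_mul, neg_sq]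

theorem pseudoMaskII_add_pseudoMaskII_add_pi_le_one {N l : ℕ} (hlN : l < N) (ξ : ℝ) :
    pseudoMaskII N l ξ + pseudoMaskII N l (ξ + π) ≤ 1 := by
  obtain ⟨n, rfl⟩ : ∃ n, N = n + 1 := ⟨N - 1, by omega⟩
  rw [pseudoMaskII_add_pi, pseudoMaskII]
  simp only [Nat.add_sub_cancel, pow_mul]
  exact pow_mul_sum_choose_add_pow_mul_sum_choose_le_one (sq_nonneg _) (sq_nonneg _)
    (sin_sq_add_cos_sq _) (Nat.le_of_lt_succ hlN)

theorem pseudo_spline_mask_subQMF_general (N l : ℕ) (hlN : l < N) (ξ : ℝ) :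
    |pseudoMaskII N l ξ| ^ 2 + |pseudoMaskII N l (ξ + π)| ^ 2 ≤
      |pseudoMaskII N l ξ| + |pseudoMaskII N l (ξ + π)| ∧
    |pseudoMaskII N l ξ| + |pseudoMaskII N l (ξ + π)| ≤ 1 := by
  have ha := pseudoMaskII_nonneg N l ξ
  have hb := pseudoMaskII_nonneg N l (ξ + π)
  have hsum := pseudoMaskII_add_pseudoMaskII_add_pi_le_one hlN ξ
  rw [abs_of_nonneg ha, abs_of_nonneg hb]
  exact ⟨by nlinarith, hsum⟩

theorem pseudo_spline_mask_subQMF (N l : ℕ) (hl : 0 < l) (hlN : l < N) (ξ : ℝ) :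
    |pseudoMaskII N l ξ| ^ 2 + |pseudoMaskII N l (ξ + π)| ^ 2 ≤
      |pseudoMaskII N l ξ| + |pseudoMaskII N l (ξ + π)| ∧
    |pseudoMaskII N l ξ| + |pseudoMaskII N l (ξ + π)| ≤ 1 :=
  pseudo_spline_mask_subQMF_general N l hlN ξ
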